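/- Let A be a ring with right Krull dimension. Then A satisfies the ascending chain condition on prime (two-sided) ideals. -/

import Mathlib

open MulOpposite

/-- Deviation (Gabriel–Rentschler Krull dimension) of a preorder is `≤ α`:
in every strictly descending chain, all but finitely many of the
intervals (corresponding to successive factor modules) have deviation `< α`. -/
def DevLE (α : Ordinal.{0}) (P : Type) (inst : Preorder P) : Prop :=
  ∀ f : ℕ → P, (∀ n : ℕ, inst.lt (f (n + 1)) (f n)) →
    ∃ N : ℕ, ∀ n : ℕ, N ≤ n → ∃ β : Ordinal.{0}, ∃ _ : β < α,
      DevLE β {x : P // inst.le (f (n + 1)) x ∧ inst.le x (f n)}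
        (@Subtype.preorder P inst fun x => inst.le (f (n + 1)) x ∧ inst.le x (f n))
termination_by α

/-- A preorder has Krull dimension (deviation) if its deviation exists as an ordinal. -/
def HasKdimO (P : Type) [inst : Preorder P] : Prop := ∃ α : Ordinal.{0}, DevLE α P inst

/-- A module has Gabriel–Rentschler Krull dimension: the deviation of its submodule
lattice exists (intervals of this lattice are the submodule lattices of the
subquotients, so this agrees with the transfinite definition via factor modules). -/
def ModHasKdim (R M : Type) [Ring R] [AddCommGroup M] [Module R M] : Prop :=
  HasKdimO (Submodule R M)

/-- A complete lattice (of submodules/ideals) is finite-dimensional: it contains no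
infinite independent family (direct sum) of nonzero elements. -/
def FinDimL (L : Type) [CompleteLattice L] : Prop :=
  ¬ ∃ f : ℕ → L, (∀ n, f n ≠ ⊥) ∧ ∀ n, f n ⊓ (⨆ m, ⨆ _ : m ≠ n, f m) = ⊥

/-- A right ideal is two-sided if it is also closed under left multiplication. -/
def IsTwoSidedR {A : Type} [Ring A] (I : Submodule Aᵐᵒᵖ A) : Prop :=
  ∀ a ∈ I, ∀ b : A, b * a ∈ I

/-- A prime (two-sided) ideal of a ring, element-wise characterization. -/
def IsPrime2 {A : Type} [Ring A] (P : Submodule Aᵐᵒᵖ A) : Prop :=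
  IsTwoSidedR P ∧ P ≠ ⊤ ∧ ∀ a b : A, (∀ x : A, a * x * b ∈ P) → a ∈ P ∨ b ∈ P

/-!
For primes `P ⊊ Q`, the deviation of `[Q, A]` is strictly smaller than that of `[P, A]`, so a
strictly ascending chain of primes would give a strictly descending sequence of ordinals.

To compare the deviations one needs `c ∈ Q` with `c r ∈ P → r ∈ P`: then `K ↦ P + cⁿK` embeds
`[Q, A]` into the factor `[P + cⁿ⁺¹A, P + cⁿA]` of a strictly descending chain. Such a `c` is
found as in Goldie's theorem. Critical right ideals give elements `u ∉ P` with `r(u) ∩ uA ⊆ P`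
inside any right ideal strictly above `P`; a triangular family `u₀, u₁, …` of them (`uᵢuⱼ ∈ P`
for `i < j`) either stops, with `⋂ r(uᵢ) ⊆ P` and `c = ∑ uᵢ`, or goes on forever and spans an
infinite direct sum modulo `P`, which a lattice with deviation cannot contain.
-/

def DevLEIcc {P : Type} [Preorder P] (α : Ordinal.{0}) (a b : P) : Prop :=
  DevLE α {x : P // a ≤ x ∧ x ≤ b} inferInstance

theorem DevLE.of_strictMono {α : Ordinal.{0}} {P Q : Type} [Preorder P] [Preorder Q] {e : Q → P}
    (he : Monotone e) (he' : StrictMono e) (h : DevLE α P inferInstance) :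
    DevLE α Q inferInstance := by
  induction α using WellFoundedLT.induction generalizing P Q with
  | _ α IH =>
    rw [DevLE] at h ⊢
    intro f hf
    obtain ⟨N, hN⟩ := h (e ∘ f) fun n => he' (hf n)
    refine ⟨N, fun n hn => ?_⟩
    obtain ⟨β, hβ, hdev⟩ := hN n hn
    exact ⟨β, hβ, IH β hβ (e := fun y => ⟨e y.1, he y.2.1, he y.2.2⟩)
      (fun _ _ h => he h) (fun _ _ h => he' h) hdev⟩

namespace DevLEIcc

variable {P Q : Type} [Preorder P] [Preorder Q] {α : Ordinal.{0}}

theorem of_map {a b : Q} {c d : P} {e : Q → P} (he : Monotone e)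
    (hmaps : ∀ x, a ≤ x → x ≤ b → c ≤ e x ∧ e x ≤ d)
    (hreflect : ∀ x y, a ≤ x → x ≤ b → a ≤ y → y ≤ b → e x ≤ e y → x ≤ y)
    (h : DevLEIcc α c d) : DevLEIcc α a b :=
  DevLE.of_strictMono (e := fun x => ⟨e x.1, hmaps x.1 x.2.1 x.2.2⟩) (fun _ _ h => he h)
    (fun x y hxy => lt_of_le_not_ge (he hxy.le) fun hyx =>
      hxy.not_ge (hreflect y.1 x.1 y.2.1 y.2.2 x.2.1 x.2.2 hyx)) h

theorem mono {a b a' b' : P} (h : DevLEIcc α a b) (ha : a ≤ a') (hb : b' ≤ b) :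
    DevLEIcc α a' b' :=
  h.of_map monotone_id (fun _ hx hx' => ⟨ha.trans hx, hx'.trans hb⟩) fun _ _ _ _ _ _ h => h

theorem of_devLE (h : DevLE α P inferInstance) (a b : P) : DevLEIcc α a b :=
  DevLE.of_strictMono (e := Subtype.val) (fun _ _ h => h) (fun _ _ h => h) h

theorem exists_lt_of_strictAnti {a b : P} (h : DevLEIcc α a b) {F : ℕ → P}
    (hF : ∀ n, a ≤ F n ∧ F n ≤ b) (hanti : ∀ n, F (n + 1) < F n) :
    ∃ n, ∃ β < α, DevLEIcc β (F (n + 1)) (F n) := by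
  rw [DevLEIcc, DevLE] at h
  obtain ⟨N, hN⟩ := h (fun n => ⟨F n, hF n⟩) hanti
  obtain ⟨β, hβ, hdev⟩ := hN N le_rfl
  exact ⟨N, β, hβ, DevLE.of_strictMono
    (e := fun x => ⟨⟨x.1, (hF (N + 1)).1.trans x.2.1, x.2.2.trans (hF N).2⟩, x.2.1, x.2.2⟩)
    (fun _ _ h => h) (fun _ _ h => h) hdev⟩

theorem exists_critical {β : Ordinal.{0}} {a c₀ : P} (h : DevLEIcc β a c₀) (hac₀ : a < c₀) :
    ∃ c, a < c ∧ c ≤ c₀ ∧ ∀ n, a < n → n < c → ∃ γ < β, DevLEIcc γ n c := by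
  by_contra! H
  choose! next hnext_gt hnext_lt hnext_dev using H
  set F : ℕ → P := fun k => next^[k] c₀ with hF
  have hF_succ : ∀ k, F (k + 1) = next (F k) := fun k => Function.iterate_succ_apply' _ _ _
  have hF_mem : ∀ k, a < F k ∧ F k ≤ c₀ := by
    intro k
    induction k with
    | zero => exact ⟨hac₀, le_rfl⟩
    | succ k ih =>
      rw [hF_succ]
      exact ⟨hnext_gt _ ih.1 ih.2, (hnext_lt _ ih.1 ih.2).le.trans ih.2⟩
  obtain ⟨n, γ, hγ, hdev⟩ := h.exists_lt_of_strictAnti (fun k => ⟨(hF_mem k).1.le, (hF_mem k).2⟩)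
    fun k => by rw [hF_succ]; exact hnext_lt _ (hF_mem k).1 (hF_mem k).2
  rw [hF_succ] at hdev
  exact hnext_dev _ (hF_mem n).1 (hF_mem n).2 γ hγ hdev

end DevLEIcc

theorem le_of_sup_le_sup_of_inf_le {L : Type*} [Lattice L] [IsModularLattice L] {a b c x y : L}
    (habc : a ⊓ c ≤ b) (hbx : b ≤ x) (hxc : x ≤ c) (hyc : y ≤ c) (h : a ⊔ y ≤ a ⊔ x) : y ≤ x :=
  calc y ≤ (x ⊔ a) ⊓ c := le_inf (le_sup_right.trans (sup_comm a x ▸ h)) hyc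
    _ = x ⊔ a ⊓ c := sup_inf_assoc_of_le a hxc
    _ ≤ x := sup_le le_rfl (habc.trans hbx)

section IndepOver

variable {L : Type} [CompleteLattice L]

def IndepOver {ι : Type*} (b : L) (I : ι → L) : Prop :=
  ∀ S S' : Set ι, Disjoint S S' → (b ⊔ ⨆ i ∈ S, I i) ⊓ (b ⊔ ⨆ i ∈ S', I i) ≤ b

theorem IndepOver.comp {ι κ : Type*} {b : L} {I : ι → L} (h : IndepOver b I) {g : κ → ι}
    (hg : Function.Injective g) : IndepOver b (I ∘ g) := fun S S' hS => by
  have := h _ _ ((Set.disjoint_image_iff hg).2 hS)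
  rwa [iSup_image, iSup_image] at this

theorem IndepOver.not_devLEIcc [IsModularLattice L] (α : Ordinal.{0}) {b t : L} {I : ℕ → L}
    (hind : IndepOver b I) (hIb : ∀ n, ¬ I n ≤ b) (hIt : ∀ n, I n ≤ t) (hbt : b ≤ t) :
    ¬ DevLEIcc α b t := by
  induction α using WellFoundedLT.induction generalizing t I with
  | _ α IH =>
  intro hdev
  -- Split `I` along `Nat.unpair` into infinitely many infinite subfamilies `J k`. The tails `T k`
  -- descend strictly, and by modularity `[b, J N]` embeds into a factor `[T (N + 1), T N]`.
  set T : ℕ → L := fun k => b ⊔ ⨆ i ∈ {i | k ≤ (Nat.unpair i).1}, I i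
  set J : ℕ → L := fun k => b ⊔ ⨆ i ∈ {i | (Nat.unpair i).1 = k}, I i
  have hJT : ∀ k, J k ≤ T k := fun k => sup_le_sup_left (biSup_mono fun i hi => hi.ge) b
  have hT_succ : ∀ k, T (k + 1) ≤ T k := fun k =>
    sup_le_sup_left (biSup_mono fun i hi => (Nat.le_succ k).trans hi) b
  have hTJ : ∀ k, T (k + 1) ⊓ J k ≤ b := fun k =>
    hind _ _ (Set.disjoint_left.2 fun i (hi : k + 1 ≤ _) (hi' : _ = k) => by omega)
  have hIJ : ∀ k j, I (Nat.pair k j) ≤ J k := fun k j =>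
    le_sup_of_le_right (le_biSup I (by simp : (Nat.unpair (Nat.pair k j)).1 = k))
  have hT_lt : ∀ k, T (k + 1) < T k := fun k => lt_of_le_not_ge (hT_succ k) fun h =>
    hIb _ ((le_inf ((hIJ k 0).trans ((hJT k).trans h)) (hIJ k 0)).trans (hTJ k))
  obtain ⟨N, β, hβ, hdevN⟩ := hdev.exists_lt_of_strictAnti (F := T)
    (fun k => ⟨le_sup_left, sup_le hbt (iSup₂_le fun i _ => hIt i)⟩) hT_lt
  refine IH β hβ (hind.comp fun _ _ h => (Nat.pair_eq_pair.1 h).2) (fun j => hIb _)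
    (hIJ N) le_sup_left (hdevN.of_map (e := (T (N + 1) ⊔ ·)) (fun _ _ h => sup_le_sup_left h _)
      (fun x _ hxJ => ⟨le_sup_left, sup_le (hT_succ N) (hxJ.trans (hJT N))⟩)
      fun x y _ hxJ hy hyJ h => le_of_sup_le_sup_of_inf_le (hTJ N) hy hyJ hxJ h)

end IndepOver

section Module

variable {R M N : Type} [Ring R] [AddCommGroup M] [Module R M] [AddCommGroup N] [Module R N]

theorem Submodule.le_of_sup_map_le_sup_map {f : M →ₗ[R] N} {b : Submodule R N}
    {K K' : Submodule R M} (hK' : b.comap f ≤ K') (h : b ⊔ K.map f ≤ b ⊔ K'.map f) :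
    K ≤ K' := by
  intro k hk
  obtain ⟨ξ, hξ, _, ⟨m, hm, rfl⟩, hsum⟩ :=
    Submodule.mem_sup.1 (h (Submodule.mem_sup_right ⟨k, hk, rfl⟩))
  have hkm : k - m ∈ K' := hK' (show f (k - m) ∈ b by rwa [map_sub, ← hsum, add_sub_cancel_right])
  simpa using K'.add_mem hkm hm

theorem Submodule.le_of_comap_inf_le_comap_inf {f : M →ₗ[R] N} {C : Submodule R M}
    {b K K' : Submodule R N} (hbK : b ≤ K) (hbK' : b ≤ K') (hK : K ≤ b ⊔ C.map f)
    (h : K.comap f ⊓ C ≤ K'.comap f ⊓ C) : K ≤ K' := by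
  intro k hk
  obtain ⟨ξ, hξ, _, ⟨m, hm, rfl⟩, hsum⟩ := Submodule.mem_sup.1 (hK hk)
  have hmK : f m ∈ K := by rw [eq_sub_of_add_eq' hsum]; exact K.sub_mem hk (hbK hξ)
  rw [← hsum]
  exact K'.add_mem (hbK' hξ) (h ⟨hmK, hm⟩).1

theorem DevLEIcc.sup_map_of_comap_inf {γ : Ordinal.{0}} {f : M →ₗ[R] N} {C : Submodule R M}
    {b : Submodule R N} (h : DevLEIcc γ (b.comap f ⊓ C) C) : DevLEIcc γ b (b ⊔ C.map f) :=
  h.of_map (e := fun K => K.comap f ⊓ C) (fun _ _ h => inf_le_inf_right _ (Submodule.comap_mono h))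
    (fun _ hbK _ => ⟨inf_le_inf_right _ (Submodule.comap_mono hbK), inf_le_right⟩)
    fun _ _ hbK hK hbK' _ h => Submodule.le_of_comap_inf_le_comap_inf hbK hbK' hK h

theorem Submodule.comap_pow_le {f : Module.End R M} {b : Submodule R M} (hf : b.comap f ≤ b)
    (n : ℕ) : b.comap (f ^ n) ≤ b := by
  induction n with
  | zero => rw [pow_zero, Module.End.one_eq_id, Submodule.comap_id]
  | succ n ih =>
    rw [pow_succ, Module.End.mul_eq_comp, Submodule.comap_comp]
    exact (Submodule.comap_mono ih).trans hf

/-- If `f` is injective modulo `b` and maps `M` into a proper `Q ⊇ b`, then `K ↦ b ⊔ fⁿ K`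
embeds `[Q, M]` into the factor `[b ⊔ fⁿ⁺¹ M, b ⊔ fⁿ M]` of a strictly descending chain. -/
theorem DevLEIcc.exists_lt_of_comap_le {α : Ordinal.{0}} {f : Module.End R M}
    {b Q : Submodule R M} (hf : b.comap f ≤ b) (hbQ : b ≤ Q) (hfQ : LinearMap.range f ≤ Q)
    (hQ : Q ≠ ⊤) (h : DevLEIcc α b ⊤) : ∃ β < α, DevLEIcc β Q ⊤ := by
  set G : ℕ → Submodule R M → Submodule R M := fun n K => b ⊔ K.map (f ^ n)
  have hG_mono : ∀ n, Monotone (G n) := fun n _ _ h => sup_le_sup_left (Submodule.map_mono h) b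
  have hG_succ : ∀ n, G (n + 1) ⊤ ≤ G n Q := fun n => sup_le_sup_left (by
    rw [pow_succ, Module.End.mul_eq_comp, Submodule.map_comp, ← LinearMap.range_eq_map]
    exact Submodule.map_mono hfQ) b
  have hG_reflect : ∀ n {K K'}, Q ≤ K' → G n K ≤ G n K' → K ≤ K' := fun n _ _ hK' =>
    Submodule.le_of_sup_map_le_sup_map (((Submodule.comap_pow_le hf n).trans hbQ).trans hK')
  have hG_lt : ∀ n, G (n + 1) ⊤ < G n ⊤ := fun n => lt_of_le_not_ge
    ((hG_succ n).trans (hG_mono n le_top)) fun hle => hQ (top_le_iff.1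
      (hG_reflect n le_rfl (hle.trans (hG_succ n))))
  obtain ⟨n, β, hβ, hdev⟩ :=
    h.exists_lt_of_strictAnti (F := fun n => G n ⊤) (fun _ => ⟨le_sup_left, le_top⟩) hG_lt
  exact ⟨β, hβ, hdev.of_map (hG_mono n)
    (fun K hQK _ => ⟨(hG_succ n).trans (hG_mono n hQK), hG_mono n le_top⟩)
    fun _ _ _ _ hQK' _ h => hG_reflect n hQK' h⟩

end Module

theorem exists_seq_of_forall_fin_exists {X : Type*} (P : X → Prop) (r : X → X → Prop)
    (h : ∀ n (u : Fin n → X), (∀ i, P (u i)) → (∀ i j, i < j → r (u i) (u j)) →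
      ∃ y, P y ∧ ∀ i, r (u i) y) :
    ∃ f : ℕ → X, (∀ n, P (f n)) ∧ ∀ m n, m < n → r (f m) (f n) := by
  have : Nonempty X := let ⟨x, _⟩ := h 0 Fin.elim0 (fun i => i.elim0) fun i => i.elim0; ⟨x⟩
  choose! F hF using h
  set f : ℕ → X := Nat.strongRec fun n g => F n fun i => g i i.2
  have hf : ∀ n, f n = F n fun i => f i := Nat.strongRec_eq _
  have key : ∀ n, P (f n) ∧ ∀ m < n, r (f m) (f n) := by
    intro n
    induction n using Nat.strong_induction_on with
    | _ n ih =>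
      rw [hf n]
      obtain ⟨hP, hr⟩ := hF n (fun i => f i) (fun i => (ih i i.2).1)
        fun i j hij => (ih j j.2).2 i hij
      exact ⟨hP, fun m hm => hr ⟨m, hm⟩⟩
  exact ⟨f, fun n => (key n).1, fun m n hmn => (key n).2 m hmn⟩

section Ring

variable {A : Type} [Ring A] {b Q X : Submodule Aᵐᵒᵖ A}

theorem Submodule.mul_mem_right (K : Submodule Aᵐᵒᵖ A) {x : A} (hx : x ∈ K) (s : A) :
    x * s ∈ K :=
  K.smul_mem (MulOpposite.op s) hx

/-- In `A / b`: `r(u) ∩ uA = 0`. -/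
def MulLeftInjOnRange (b : Submodule Aᵐᵒᵖ A) (u : A) : Prop :=
  ∀ r, u * (u * r) ∈ b → u * r ∈ b

theorem IsTwoSidedR.le_comap_mulLeft (hb : IsTwoSidedR b) (u : A) :
    b ≤ b.comap (LinearMap.mulLeft Aᵐᵒᵖ u) := fun r hr => hb r hr u

theorem IsPrime2.exists_mul_mul_not_mem (hb : IsPrime2 b) {a c : A} (ha : a ∉ b) (hc : c ∉ b) :
    ∃ x, a * x * c ∉ b := by
  by_contra! H
  exact (hb.2.2 a c H).elim ha hc

theorem IsPrime2.not_inf_le (hb : IsPrime2 b) (hQ : IsTwoSidedR Q) (hQb : ¬ Q ≤ b)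
    (hX : ¬ X ≤ b) : ¬ X ⊓ Q ≤ b := by
  obtain ⟨a, haX, hab⟩ := SetLike.not_le_iff_exists.1 hX
  obtain ⟨q, hqQ, hqb⟩ := SetLike.not_le_iff_exists.1 hQb
  obtain ⟨x, hx⟩ := hb.exists_mul_mul_not_mem hab hqb
  exact fun h => hx (h ⟨X.mul_mem_right (X.mul_mem_right haX x) q, hQ q hqQ (a * x)⟩)

/-- A critical right ideal `C` over `b` of minimal deviation yields `u = a x ∈ C` with
`a x a ∉ b`; were `r(u) ∩ C ⊄ b`, the interval `[b, b + uC]` would embed into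
`[r(u) ∩ C, C]` and have smaller deviation. -/
theorem IsPrime2.exists_mulLeftInjOnRange {α : Ordinal.{0}} (hb : IsPrime2 b) (hbX : b < X)
    (hdev : DevLEIcc α b X) : ∃ u ∈ X, u ∉ b ∧ MulLeftInjOnRange b u := by
  obtain ⟨β, ⟨C₀, hbC₀, hC₀X, hdevC₀⟩, hmin⟩ := wellFounded_lt.has_min
    {γ : Ordinal.{0} | ∃ C, b < C ∧ C ≤ X ∧ DevLEIcc γ b C} ⟨α, X, hbX, le_rfl, hdev⟩
  obtain ⟨C, hbC, hCC₀, hcrit⟩ := hdevC₀.exists_critical hbC₀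
  obtain ⟨a, haC, hab⟩ := SetLike.exists_of_lt hbC
  obtain ⟨x, hx⟩ := hb.exists_mul_mul_not_mem hab hab
  have hCX : C ≤ X := hCC₀.trans hC₀X
  have huC : a * x ∈ C := C.mul_mem_right haC x
  have hmapC : C.map (LinearMap.mulLeft Aᵐᵒᵖ (a * x)) ≤ C := by
    rintro _ ⟨m, -, rfl⟩
    exact C.mul_mem_right huC m
  have hV : b.comap (LinearMap.mulLeft Aᵐᵒᵖ (a * x)) ⊓ C ≤ b := by
    by_contra hVb
    obtain ⟨γ, hγ, hdevγ⟩ := hcrit _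
      (lt_of_le_not_ge (le_inf (hb.1.le_comap_mulLeft _) hbC.le) hVb)
      (lt_of_le_not_ge inf_le_right fun h => hx (h haC).1)
    have hb_lt : b < b ⊔ C.map (LinearMap.mulLeft Aᵐᵒᵖ (a * x)) := lt_of_le_not_ge le_sup_left
      fun h => hx (h (Submodule.mem_sup_right (Submodule.mem_map_of_mem haC)))
    exact hmin γ ⟨_, hb_lt, sup_le (hbC.le.trans hCX) (hmapC.trans hCX),
      hdevγ.sup_map_of_comap_inf⟩ hγ
  exact ⟨a * x, hCX huC, fun h => hx (b.mul_mem_right h a),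
    fun r hr => hV ⟨hr, C.mul_mem_right huC r⟩⟩

theorem IsTwoSidedR.mul_mem_of_sum_mem {ι : Type*} [LinearOrder ι] (hb : IsTwoSidedR b)
    {u : ι → A} (hu : ∀ i, MulLeftInjOnRange b (u i)) (htri : ∀ i j, i < j → u i * u j ∈ b)
    (F : Finset ι) (s : ι → A) (hF : ∑ i ∈ F, u i * s i ∈ b) : ∀ i ∈ F, u i * s i ∈ b := by
  classical
  induction F using Finset.induction_on_min with
  | empty => simp
  | insert a F ha ih =>
    rw [Finset.sum_insert fun h => lt_irrefl a (ha a h)] at hF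
    have hrest : u a * ∑ i ∈ F, u i * s i ∈ b := by
      rw [Finset.mul_sum]
      exact b.sum_mem fun i hi => by
        rw [← mul_assoc]
        exact b.mul_mem_right (htri a i (ha i hi)) (s i)
    have hua : u a * s a ∈ b := hu a (s a) (by
      simpa only [mul_add, add_sub_cancel_right] using b.sub_mem (hb _ hF (u a)) hrest)
    have hF' : ∑ i ∈ F, u i * s i ∈ b := by simpa using b.sub_mem hF hua
    intro i hi
    rcases Finset.mem_insert.1 hi with rfl | hi
    · exact hua
    · exact ih hF' i hi

theorem IsTwoSidedR.indepOver_span (hb : IsTwoSidedR b) {u : ℕ → A}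
    (hu : ∀ i, MulLeftInjOnRange b (u i)) (htri : ∀ i j, i < j → u i * u j ∈ b) :
    IndepOver b fun i => Submodule.span Aᵐᵒᵖ {u i} := by
  have hlc : ∀ l : ℕ →₀ Aᵐᵒᵖ, Finsupp.linearCombination Aᵐᵒᵖ u l ∈ b →
      ∀ i ∈ l.support, l i • u i ∈ b := by
    intro l hl
    rw [Finsupp.linearCombination_apply, Finsupp.sum] at hl
    simp only [MulOpposite.smul_eq_mul_unop] at hl ⊢
    exact hb.mul_mem_of_sum_mem hu htri l.support (fun i => (l i).unop) hl
  have hspan : ∀ T : Set ℕ, ⨆ i ∈ T, Submodule.span Aᵐᵒᵖ {u i} = Submodule.span Aᵐᵒᵖ (u '' T) :=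
    fun T => by rw [Set.image_eq_iUnion, Submodule.span_iUnion₂]
  intro S S' hS x hx
  obtain ⟨hx, hx'⟩ := Submodule.mem_inf.1 hx
  rw [hspan, Submodule.mem_sup] at hx hx'
  obtain ⟨ξ, hξ, _, hy, rfl⟩ := hx
  obtain ⟨ξ', hξ', _, hy', hsum⟩ := hx'
  obtain ⟨l, hl, rfl⟩ := (Finsupp.mem_span_image_iff_linearCombination _).1 hy
  obtain ⟨l', hl', rfl⟩ := (Finsupp.mem_span_image_iff_linearCombination _).1 hy'
  have hdiff : Finsupp.linearCombination Aᵐᵒᵖ u (l - l') ∈ b := by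
    rw [map_sub, show Finsupp.linearCombination Aᵐᵒᵖ u l - Finsupp.linearCombination Aᵐᵒᵖ u l'
      = ξ' - ξ by rw [sub_eq_sub_iff_add_eq_add, add_comm]; exact hsum.symm]
    exact b.sub_mem hξ' hξ
  refine b.add_mem hξ ?_
  rw [Finsupp.linearCombination_apply, Finsupp.sum]
  refine b.sum_mem fun i hi => ?_
  have hi' : l' i = 0 := Finsupp.notMem_support_iff.1 fun h => Set.disjoint_left.1 hS
    ((Finsupp.mem_supported _ _).1 hl hi) ((Finsupp.mem_supported _ _).1 hl' h)
  simpa [hi'] using hlc _ hdiff i (by simpa [hi'] using hi)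

theorem IsPrime2.exists_mem_comap_mulLeft_le {α : Ordinal.{0}} (hb : IsPrime2 b)
    (hQ : IsTwoSidedR Q) (hbQ : b < Q) (hdev : DevLEIcc α b ⊤) :
    ∃ c ∈ Q, b.comap (LinearMap.mulLeft Aᵐᵒᵖ c) ≤ b := by
  by_contra! H
  have hstep : ∀ n (u : Fin n → A), (∀ i, u i ∈ Q ∧ u i ∉ b ∧ MulLeftInjOnRange b (u i)) →
      (∀ i j, i < j → u i * u j ∈ b) →
      ∃ y, (y ∈ Q ∧ y ∉ b ∧ MulLeftInjOnRange b y) ∧ ∀ i, u i * y ∈ b := by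
    intro n u hu htri
    set Z := ⨅ i, b.comap (LinearMap.mulLeft Aᵐᵒᵖ (u i))
    have hZ : ¬ Z ≤ b := fun hZ => H (∑ i, u i) (Q.sum_mem fun i _ => (hu i).1) fun r hr =>
      hZ <| Submodule.mem_iInf _ |>.2 fun i => hb.1.mul_mem_of_sum_mem (fun i => (hu i).2.2) htri
        Finset.univ (fun _ => r) (by simpa [Finset.sum_mul] using hr) i (Finset.mem_univ i)
    have hbZQ : b < Z ⊓ Q := lt_of_le_not_ge
      (le_inf (le_iInf fun i => hb.1.le_comap_mulLeft _) hbQ.le) (hb.not_inf_le hQ hbQ.not_ge hZ)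
    obtain ⟨y, hyZQ, hyb, hy⟩ := hb.exists_mulLeftInjOnRange hbZQ (hdev.mono le_rfl le_top)
    exact ⟨y, ⟨hyZQ.2, hyb, hy⟩, fun i => (Submodule.mem_iInf _).1 hyZQ.1 i⟩
  obtain ⟨u, hu, htri⟩ := exists_seq_of_forall_fin_exists
    (fun y => y ∈ Q ∧ y ∉ b ∧ MulLeftInjOnRange b y) (fun x y => x * y ∈ b) hstep
  exact (hb.1.indepOver_span (fun i => (hu i).2.2) htri).not_devLEIcc α
    (fun i h => (hu i).2.1 (h (Submodule.mem_span_singleton_self _))) (fun _ => le_top) le_top hdev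

theorem IsPrime2.exists_devLEIcc_lt {α : Ordinal.{0}} (hb : IsPrime2 b) (hQ : IsTwoSidedR Q)
    (hQ_top : Q ≠ ⊤) (hbQ : b < Q) (hdev : DevLEIcc α b ⊤) : ∃ β < α, DevLEIcc β Q ⊤ := by
  obtain ⟨c, hcQ, hc⟩ := hb.exists_mem_comap_mulLeft_le hQ hbQ hdev
  exact hdev.exists_lt_of_comap_le hc hbQ.le (by rintro _ ⟨r, rfl⟩; exact Q.mul_mem_right hcQ r)
    hQ_top

theorem not_devLEIcc_of_strictMono_isPrime2 (α : Ordinal.{0}) {P : ℕ → Submodule Aᵐᵒᵖ A}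
    (hP : ∀ n, IsPrime2 (P n)) (hmono : StrictMono P) : ¬ DevLEIcc α (P 0) ⊤ := by
  induction α using WellFoundedLT.induction generalizing P with
  | _ α IH =>
  intro hdev
  obtain ⟨β, hβ, hdevβ⟩ := (hP 0).exists_devLEIcc_lt (hP 1).1 (hP 1).2.1 (hmono zero_lt_one) hdev
  exact IH β hβ (fun n => hP (n + 1)) (fun m n h => hmono (Nat.succ_lt_succ h)) hdevβ

theorem wellFoundedGT_isPrime2 (h : HasKdimO (Submodule Aᵐᵒᵖ A)) :
    WellFoundedGT {P : Submodule Aᵐᵒᵖ A // IsPrime2 P} := by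
  obtain ⟨α, hα⟩ := h
  exact ⟨wellFounded_iff_isEmpty_descending_chain.2 ⟨fun ⟨g, hg⟩ =>
    not_devLEIcc_of_strictMono_isPrime2 α (fun n => (g n).2)
      (fun _ _ h => strictMono_nat_of_lt_succ hg h) (DevLEIcc.of_devLE hα _ _)⟩⟩

end Ring

theorem stmt17 (A : Type) [Ring A] (h : HasKdimO (Submodule Aᵐᵒᵖ A)) :
    ∀ f : ℕ → Submodule Aᵐᵒᵖ A, (∀ n, IsPrime2 (f n)) → Monotone f →
      ∃ N : ℕ, ∀ n : ℕ, N ≤ n → f n = f N := by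
  intro f hprime hmono
  have := wellFoundedGT_isPrime2 h
  obtain ⟨N, hN⟩ := WellFoundedGT.monotone_chain_condition
    (⟨fun n => ⟨f n, hprime n⟩, hmono⟩ : ℕ →o {P : Submodule Aᵐᵒᵖ A // IsPrime2 P})
  exact ⟨N, fun n hn => congrArg Subtype.val (hN n hn).symm⟩
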